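/- Let Γ be a finite simple graph, s a cyclically minimal element of G = G(Γ) whose support supp(s) is synchronised. Set A₀ = ⟨supp(s) ∪ lk(s)⟩, A₁ = ⟨A \ supp(s)⟩, and U = ⟨lk(s)⟩. Then G decomposes as the amalgamated free product G = A₀ *_U A₁, and moreover A₀ = U × K where K = ⟨supp(s)⟩. -/

import Mathlib

/-- The commutation relations of a right-angled Artin group on the graph `Γ`. -/
def raagRels {A : Type*} (Γ : SimpleGraph A) : Set (FreeGroup A) :=
  {r | ∃ x y : A, Γ.Adj x y ∧
      r = FreeGroup.of x * FreeGroup.of y * (FreeGroup.of x)⁻¹ * (FreeGroup.of y)⁻¹}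

/-- The right-angled Artin (partially commutative) group on the graph `Γ`. -/
abbrev RAAG {A : Type*} (Γ : SimpleGraph A) := PresentedGroup (raagRels Γ)

/-- The canonical generator of the RAAG corresponding to a vertex. -/
def raagGen {A : Type*} (Γ : SimpleGraph A) (a : A) : RAAG Γ := PresentedGroup.of a

/-- The word length of an element of a RAAG with respect to the canonical generators. -/
noncomputable def raagLen {A : Type*} [DecidableEq A] (Γ : SimpleGraph A) (g : RAAG Γ) : ℕ :=
  sInf {n | ∃ w : FreeGroup A, PresentedGroup.mk (raagRels Γ) w = g ∧ w.toWord.length = n}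

/-- The support of an element: the set of generators occurring in a minimal-length word
representing it. -/
noncomputable def raagSupp {A : Type*} [DecidableEq A] (Γ : SimpleGraph A) (g : RAAG Γ) : Set A :=
  {a | ∃ w : FreeGroup A, PresentedGroup.mk (raagRels Γ) w = g ∧
      w.toWord.length = raagLen Γ g ∧ a ∈ w.toWord.map Prod.fst}

/-- The canonical parabolic subgroup generated by a subset of the vertices. -/
def parabolic {A : Type*} (Γ : SimpleGraph A) (Y : Set A) : Subgroup (RAAG Γ) :=
  Subgroup.closure (raagGen Γ '' Y)

/-- `maln K` : the set of elements `x` with `x⁻¹ K x ∩ K = {1}`. -/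
def maln {G : Type*} [Group G] (K : Subgroup G) : Set G :=
  {x : G | ∀ k ∈ K, x⁻¹ * k * x ∈ K → k = 1}

/-- An element is cyclically minimal if it has minimal length in its conjugacy class. -/
def CyclicallyMinimal {A : Type*} [DecidableEq A] (Γ : SimpleGraph A) (g : RAAG Γ) : Prop :=
  ∀ x : RAAG Γ, raagLen Γ g ≤ raagLen Γ (x⁻¹ * g * x)

/-- The two-element family of groups for a binary amalgamated product of subgroups. -/
def amalgFam {G : Type*} [Group G] (A₀ A₁ : Subgroup G) : Bool → Type _ :=
  fun b => match b with
  | false => A₀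
  | true => A₁

instance amalgFamGroup {G : Type*} [Group G] (A₀ A₁ : Subgroup G) :
    ∀ b, Group (amalgFam A₀ A₁ b) :=
  fun b => match b with
  | false => inferInstanceAs (Group A₀)
  | true => inferInstanceAs (Group A₁)

/-- The inclusion maps of the common subgroup into the two factors. -/
def amalgMaps {G : Type*} [Group G] {A₀ A₁ U : Subgroup G}
    (h₀ : U ≤ A₀) (h₁ : U ≤ A₁) : ∀ b, ↥U →* amalgFam A₀ A₁ b :=
  fun b => match b with
  | false => Subgroup.inclusion h₀
  | true => Subgroup.inclusion h₁

section Aux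
variable {A : Type*} (Γ : SimpleGraph A)

theorem raag_gen_mem {Y : Set A} {a : A} (h : a ∈ Y) : raagGen Γ a ∈ parabolic Γ Y :=
  Subgroup.subset_closure ⟨a, h, rfl⟩

theorem raag_gen_commute {a b : A} (h : Γ.Adj a b) :
    Commute (raagGen Γ a) (raagGen Γ b) := by
  rw [← commutatorElement_eq_one_iff_commute]
  have hr : (FreeGroup.of a * FreeGroup.of b * (FreeGroup.of a)⁻¹ * (FreeGroup.of b)⁻¹ :
      FreeGroup A) ∈ raagRels Γ := ⟨a, b, h, rfl⟩
  have h1 : PresentedGroup.mk (raagRels Γ)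
      (FreeGroup.of a * FreeGroup.of b * (FreeGroup.of a)⁻¹ * (FreeGroup.of b)⁻¹) = 1 :=
    (QuotientGroup.eq_one_iff _).mpr (Subgroup.subset_normalClosure hr)
  simpa [commutatorElement_def, raagGen, PresentedGroup.of, map_mul] using h1

theorem subgroup_commute {H : Subgroup (RAAG Γ)} (x y : H)
    (h : Commute (x : RAAG Γ) (y : RAAG Γ)) : Commute x y :=
  Subtype.ext h.eq

open Monoid

variable (S L : Set A)
  (h₀ : parabolic Γ L ≤ parabolic Γ (S ∪ L))
  (h₁ : parabolic Γ L ≤ parabolic Γ {a | a ∉ S})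

/-- The forward homomorphism from the pushout to the RAAG. -/
def raagAmalgTo : Monoid.PushoutI (amalgMaps h₀ h₁) →* RAAG Γ :=
  Monoid.PushoutI.lift
    (fun b => match b with
      | false => (parabolic Γ (S ∪ L)).subtype
      | true => (parabolic Γ {a | a ∉ S}).subtype)
    (parabolic Γ L).subtype
    (by intro b; cases b <;> rfl)

@[simp] theorem raagAmalgTo_of_false (g : parabolic Γ (S ∪ L)) :
    raagAmalgTo Γ S L h₀ h₁ (Monoid.PushoutI.of (φ := amalgMaps h₀ h₁) false g) = ↑g :=
  Monoid.PushoutI.lift_of _ _ _ _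

@[simp] theorem raagAmalgTo_of_true (g : parabolic Γ {a | a ∉ S}) :
    raagAmalgTo Γ S L h₀ h₁ (Monoid.PushoutI.of (φ := amalgMaps h₀ h₁) true g) = ↑g :=
  Monoid.PushoutI.lift_of _ _ _ _

open Classical in
/-- Assignment of generators to the two sides of the pushout. -/
noncomputable def raagFb : A → Monoid.PushoutI (amalgMaps h₀ h₁) := fun a =>
  if h : a ∈ S ∪ L then
    Monoid.PushoutI.of (φ := amalgMaps h₀ h₁) false ⟨raagGen Γ a, raag_gen_mem Γ h⟩
  else
    Monoid.PushoutI.of (φ := amalgMaps h₀ h₁) true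
      ⟨raagGen Γ a, raag_gen_mem Γ (show a ∈ {a | a ∉ S} from fun hs => h (Or.inl hs))⟩

theorem raagFb_mem_Y {a : A} (h : a ∈ S ∪ L) :
    raagFb Γ S L h₀ h₁ a =
      Monoid.PushoutI.of (φ := amalgMaps h₀ h₁) false ⟨raagGen Γ a, raag_gen_mem Γ h⟩ := by
  simp only [raagFb, dif_pos h]

theorem raagFb_mem_Z {a : A} (h : a ∈ {a | a ∉ S}) :
    raagFb Γ S L h₀ h₁ a =
      Monoid.PushoutI.of (φ := amalgMaps h₀ h₁) true ⟨raagGen Γ a, raag_gen_mem Γ h⟩ := by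
  by_cases hy : a ∈ S ∪ L
  · have haL : a ∈ L := hy.resolve_left h
    have hmem : raagGen Γ a ∈ parabolic Γ L := raag_gen_mem Γ haL
    have e1 : raagFb Γ S L h₀ h₁ a =
        Monoid.PushoutI.of (φ := amalgMaps h₀ h₁) false
          ((amalgMaps h₀ h₁ false) ⟨raagGen Γ a, hmem⟩) := by
      rw [raagFb_mem_Y Γ S L h₀ h₁ hy]
      exact congrArg _ (Subtype.ext rfl)
    rw [e1, Monoid.PushoutI.of_apply_eq_base,
      ← Monoid.PushoutI.of_apply_eq_base (φ := amalgMaps h₀ h₁) true]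
    exact congrArg _ (Subtype.ext rfl)
  · simp only [raagFb, dif_neg hy]

theorem raagFb_rels (hLS : ∀ a ∈ L, ∀ b ∈ S, Γ.Adj a b)
    (hedge : ∀ x y : A, Γ.Adj x y → x ∈ S → y ∈ S ∪ L) :
    ∀ r ∈ raagRels Γ, FreeGroup.lift (raagFb Γ S L h₀ h₁) r = 1 := by
  rintro r ⟨x, y, hxy, rfl⟩
  simp only [map_mul, map_inv, FreeGroup.lift_apply_of]
  rw [← commutatorElement_def, commutatorElement_eq_one_iff_commute]
  by_cases hx : x ∈ S
  · have hyY : y ∈ S ∪ L := hedge x y hxy hx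
    rw [raagFb_mem_Y Γ S L h₀ h₁ (Or.inl hx), raagFb_mem_Y Γ S L h₀ h₁ hyY]
    exact (subgroup_commute Γ _ _ (raag_gen_commute Γ hxy)).map _
  · by_cases hy : y ∈ S
    · have hxY : x ∈ S ∪ L := hedge y x hxy.symm hy
      rw [raagFb_mem_Y Γ S L h₀ h₁ hxY, raagFb_mem_Y Γ S L h₀ h₁ (Or.inl hy)]
      exact (subgroup_commute Γ _ _ (raag_gen_commute Γ hxy)).map _
    · rw [raagFb_mem_Z Γ S L h₀ h₁ hx, raagFb_mem_Z Γ S L h₀ h₁ hy]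
      exact (subgroup_commute Γ _ _ (raag_gen_commute Γ hxy)).map _

variable (hLS : ∀ a ∈ L, ∀ b ∈ S, Γ.Adj a b)
  (hedge : ∀ x y : A, Γ.Adj x y → x ∈ S → y ∈ S ∪ L)

/-- The backward homomorphism from the RAAG to the pushout. -/
noncomputable def raagAmalgBack : RAAG Γ →* Monoid.PushoutI (amalgMaps h₀ h₁) :=
  PresentedGroup.toGroup (raagFb_rels Γ S L h₀ h₁ hLS hedge)

theorem raagAmalgBack_gen (a : A) :
    raagAmalgBack Γ S L h₀ h₁ hLS hedge (raagGen Γ a) = raagFb Γ S L h₀ h₁ a :=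
  PresentedGroup.toGroup.of _

theorem raagAmalgBack_mem_Y {x : RAAG Γ} (hx : x ∈ parabolic Γ (S ∪ L)) :
    raagAmalgBack Γ S L h₀ h₁ hLS hedge x =
      Monoid.PushoutI.of (φ := amalgMaps h₀ h₁) false ⟨x, hx⟩ := by
  refine Subgroup.closure_induction
    (p := fun x hx => raagAmalgBack Γ S L h₀ h₁ hLS hedge x =
      Monoid.PushoutI.of (φ := amalgMaps h₀ h₁) false ⟨x, hx⟩) ?_ ?_ ?_ ?_ hx
  · rintro _ ⟨a, ha, rfl⟩
    rw [raagAmalgBack_gen, raagFb_mem_Y Γ S L h₀ h₁ ha]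
  · show raagAmalgBack Γ S L h₀ h₁ hLS hedge 1 =
      Monoid.PushoutI.of (φ := amalgMaps h₀ h₁) false ⟨1, one_mem _⟩
    rw [map_one]
    exact (map_one (Monoid.PushoutI.of (φ := amalgMaps h₀ h₁) false)).symm
  · intro x y hxm hym hx hy
    rw [map_mul, hx, hy]
    exact (map_mul _ _ _).symm
  · intro x hxm hx
    rw [map_inv, hx]
    exact (map_inv _ _).symm

theorem raagAmalgBack_mem_Z {x : RAAG Γ} (hx : x ∈ parabolic Γ {a | a ∉ S}) :
    raagAmalgBack Γ S L h₀ h₁ hLS hedge x =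
      Monoid.PushoutI.of (φ := amalgMaps h₀ h₁) true ⟨x, hx⟩ := by
  refine Subgroup.closure_induction
    (p := fun x hx => raagAmalgBack Γ S L h₀ h₁ hLS hedge x =
      Monoid.PushoutI.of (φ := amalgMaps h₀ h₁) true ⟨x, hx⟩) ?_ ?_ ?_ ?_ hx
  · rintro _ ⟨a, ha, rfl⟩
    rw [raagAmalgBack_gen, raagFb_mem_Z Γ S L h₀ h₁ ha]
  · show raagAmalgBack Γ S L h₀ h₁ hLS hedge 1 =
      Monoid.PushoutI.of (φ := amalgMaps h₀ h₁) true ⟨1, one_mem _⟩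
    rw [map_one]
    exact (map_one (Monoid.PushoutI.of (φ := amalgMaps h₀ h₁) true)).symm
  · intro x y hxm hym hx hy
    rw [map_mul, hx, hy]
    exact (map_mul _ _ _).symm
  · intro x hxm hx
    rw [map_inv, hx]
    exact (map_inv _ _).symm

theorem raagAmalg_left_inv :
    (raagAmalgBack Γ S L h₀ h₁ hLS hedge).comp (raagAmalgTo Γ S L h₀ h₁) =
      MonoidHom.id _ := by
  have hof : ∀ b, ((raagAmalgBack Γ S L h₀ h₁ hLS hedge).comp
        (raagAmalgTo Γ S L h₀ h₁)).comp (Monoid.PushoutI.of (φ := amalgMaps h₀ h₁) b) =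
      (MonoidHom.id _).comp (Monoid.PushoutI.of (φ := amalgMaps h₀ h₁) b) := by
    intro b
    cases b
    · refine MonoidHom.ext fun g => ?_
      show raagAmalgBack Γ S L h₀ h₁ hLS hedge
          (raagAmalgTo Γ S L h₀ h₁ (Monoid.PushoutI.of (φ := amalgMaps h₀ h₁) false g)) =
        Monoid.PushoutI.of (φ := amalgMaps h₀ h₁) false g
      erw [raagAmalgTo_of_false Γ S L h₀ h₁ g, raagAmalgBack_mem_Y Γ S L h₀ h₁ hLS hedge g.2]
      exact congrArg _ (Subtype.ext rfl)
    · refine MonoidHom.ext fun g => ?_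
      show raagAmalgBack Γ S L h₀ h₁ hLS hedge
          (raagAmalgTo Γ S L h₀ h₁ (Monoid.PushoutI.of (φ := amalgMaps h₀ h₁) true g)) =
        Monoid.PushoutI.of (φ := amalgMaps h₀ h₁) true g
      erw [raagAmalgTo_of_true Γ S L h₀ h₁ g, raagAmalgBack_mem_Z Γ S L h₀ h₁ hLS hedge g.2]
      exact congrArg _ (Subtype.ext rfl)
  refine Monoid.PushoutI.hom_ext hof ?_
  rw [← Monoid.PushoutI.of_comp_eq_base (φ := amalgMaps h₀ h₁) false,
    ← MonoidHom.comp_assoc, ← MonoidHom.comp_assoc, hof false]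

theorem raagAmalg_right_inv :
    (raagAmalgTo Γ S L h₀ h₁).comp (raagAmalgBack Γ S L h₀ h₁ hLS hedge) =
      MonoidHom.id _ := by
  refine PresentedGroup.ext ?_
  intro a
  show raagAmalgTo Γ S L h₀ h₁ (raagAmalgBack Γ S L h₀ h₁ hLS hedge (raagGen Γ a)) = raagGen Γ a
  rw [raagAmalgBack_gen]
  by_cases h : a ∈ S ∪ L
  · rw [raagFb_mem_Y Γ S L h₀ h₁ h, raagAmalgTo_of_false]
  · rw [raagFb_mem_Z Γ S L h₀ h₁ (fun hs => h (Or.inl hs)), raagAmalgTo_of_true]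

end Aux

theorem raag_amalgam_main {A : Type*} (Γ : SimpleGraph A) (S L : Set A)
    (hLS : ∀ a ∈ L, ∀ b ∈ S, Γ.Adj a b)
    (hedge : ∀ x y : A, Γ.Adj x y → x ∈ S → y ∈ S ∪ L) :
    ∃ (h₀ : parabolic Γ L ≤ parabolic Γ (S ∪ L))
      (h₁ : parabolic Γ L ≤ parabolic Γ {a | a ∉ S}),
      (∀ u ∈ parabolic Γ L, ∀ k ∈ parabolic Γ S, Commute u k) ∧
      (parabolic Γ L ⊓ parabolic Γ S = ⊥) ∧
      (parabolic Γ L ⊔ parabolic Γ S = parabolic Γ (S ∪ L)) ∧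
      ∃ e : Monoid.PushoutI (amalgMaps h₀ h₁) ≃* RAAG Γ,
        (∀ g : parabolic Γ (S ∪ L),
            e (Monoid.PushoutI.of (φ := amalgMaps h₀ h₁) false g) = ↑g) ∧
        (∀ g : parabolic Γ {a | a ∉ S},
            e (Monoid.PushoutI.of (φ := amalgMaps h₀ h₁) true g) = ↑g) := by
  classical
  have hLZ : L ⊆ {a | a ∉ S} := fun a ha haS => (Γ.irrefl (hLS a ha a haS))
  have hle0 : parabolic Γ L ≤ parabolic Γ (S ∪ L) :=
    Subgroup.closure_mono (Set.image_mono Set.subset_union_right)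
  have hle1 : parabolic Γ L ≤ parabolic Γ {a | a ∉ S} :=
    Subgroup.closure_mono (Set.image_mono hLZ)
  refine ⟨hle0, hle1, ?_, ?_, ?_, ?_⟩
  · -- commuting
    have hUcent : parabolic Γ L ≤ Subgroup.centralizer (parabolic Γ S : Set (RAAG Γ)) := by
      refine (Subgroup.closure_le _).2 ?_
      rintro _ ⟨a, ha, rfl⟩
      rw [SetLike.mem_coe, Subgroup.mem_centralizer_iff]
      intro k hk
      have : parabolic Γ S ≤ Subgroup.centralizer {raagGen Γ a} := by
        refine (Subgroup.closure_le _).2 ?_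
        rintro _ ⟨b, hb, rfl⟩
        rw [SetLike.mem_coe, Subgroup.mem_centralizer_iff]
        rintro _ rfl
        exact (raag_gen_commute Γ (hLS a ha b hb)).eq
      exact ((Subgroup.mem_centralizer_iff.1 (this hk)) _ rfl).symm
    intro u hu k hk
    exact (Subgroup.mem_centralizer_iff.1 (hUcent hu) k hk).symm
  · -- trivial intersection via retraction
    have hrel : ∀ r ∈ raagRels Γ,
        FreeGroup.lift (fun a => if a ∈ S then raagGen Γ a else 1) r = 1 := by
      rintro r ⟨x, y, hxy, rfl⟩
      simp only [map_mul, map_inv, FreeGroup.lift_apply_of]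
      rw [← commutatorElement_def, commutatorElement_eq_one_iff_commute]
      by_cases hx : x ∈ S <;> by_cases hy : y ∈ S <;>
        simp [hx, hy, raag_gen_commute Γ hxy]
    set ρ : RAAG Γ →* RAAG Γ := PresentedGroup.toGroup hrel with hρ
    rw [eq_bot_iff]
    intro g hg
    have hfix : ρ g = g := by
      refine Subgroup.closure_induction (k := raagGen Γ '' S)
        (p := fun x _ => ρ x = x) ?_ (map_one ρ) ?_ ?_ hg.2
      · rintro _ ⟨a, ha, rfl⟩
        have : ρ (raagGen Γ a) = if a ∈ S then raagGen Γ a else 1 :=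
          PresentedGroup.toGroup.of hrel (x := a)
        rw [this, if_pos ha]
      · intro x y _ _ h1 h2; rw [map_mul, h1, h2]
      · intro x _ h1; rw [map_inv, h1]
    have hkill : ρ g = 1 := by
      refine Subgroup.closure_induction (k := raagGen Γ '' L)
        (p := fun x _ => ρ x = 1) ?_ (map_one ρ) ?_ ?_ hg.1
      · rintro _ ⟨a, ha, rfl⟩
        have : ρ (raagGen Γ a) = if a ∈ S then raagGen Γ a else 1 :=
          PresentedGroup.toGroup.of hrel (x := a)
        rw [this, if_neg (hLZ ha)]
      · intro x y _ _ h1 h2; rw [map_mul, h1, h2, mul_one]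
      · intro x _ h1; rw [map_inv, h1, inv_one]
    rw [Subgroup.mem_bot, ← hfix, hkill]
  · -- sup
    simp [parabolic, Set.image_union, Subgroup.closure_union, sup_comm]
  · -- the amalgam
    refine ⟨MonoidHom.toMulEquiv (raagAmalgTo Γ S L hle0 hle1)
        (raagAmalgBack Γ S L hle0 hle1 hLS hedge)
        (raagAmalg_left_inv Γ S L hle0 hle1 hLS hedge)
        (raagAmalg_right_inv Γ S L hle0 hle1 hLS hedge), ?_, ?_⟩
    · intro g
      exact raagAmalgTo_of_false Γ S L hle0 hle1 g
    · intro g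
      exact raagAmalgTo_of_true Γ S L hle0 hle1 g

/-- If s is cyclically minimal with synchronised support, then with
A₀ = ⟨supp(s) ∪ lk(s)⟩, A₁ = ⟨A \ supp(s)⟩, U = ⟨lk(s)⟩ and K = ⟨supp(s)⟩, the group G(Γ)
is the amalgamated free product A₀ *_U A₁, and A₀ is the internal direct product U × K. -/
theorem raag_synchronised_amalgam_decomposition {A : Type*} [DecidableEq A]
    (Γ : SimpleGraph A) (s : RAAG Γ)
    (hcm : CyclicallyMinimal Γ s)
    (hsync : ∀ v ∈ raagSupp Γ s, ∀ u : A, (Γ.Adj u v ∨ u = v) →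
        (u ∈ raagSupp Γ s ∨ ∀ b ∈ raagSupp Γ s, Γ.Adj u b)) :
    ∃ (h₀ : parabolic Γ {x | ∀ b ∈ raagSupp Γ s, Γ.Adj x b} ≤
            parabolic Γ (raagSupp Γ s ∪ {x | ∀ b ∈ raagSupp Γ s, Γ.Adj x b}))
      (h₁ : parabolic Γ {x | ∀ b ∈ raagSupp Γ s, Γ.Adj x b} ≤
            parabolic Γ {a | a ∉ raagSupp Γ s}),
      -- A₀ is the internal direct product U × K :
      (∀ u ∈ parabolic Γ {x | ∀ b ∈ raagSupp Γ s, Γ.Adj x b},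
        ∀ k ∈ parabolic Γ (raagSupp Γ s), Commute u k) ∧
      (parabolic Γ {x | ∀ b ∈ raagSupp Γ s, Γ.Adj x b} ⊓ parabolic Γ (raagSupp Γ s) = ⊥) ∧
      (parabolic Γ {x | ∀ b ∈ raagSupp Γ s, Γ.Adj x b} ⊔ parabolic Γ (raagSupp Γ s) =
        parabolic Γ (raagSupp Γ s ∪ {x | ∀ b ∈ raagSupp Γ s, Γ.Adj x b})) ∧
      -- G is the amalgamated free product A₀ *_U A₁ :
      ∃ e : Monoid.PushoutI (amalgMaps h₀ h₁) ≃* RAAG Γ,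
        (∀ g : parabolic Γ (raagSupp Γ s ∪ {x | ∀ b ∈ raagSupp Γ s, Γ.Adj x b}),
            e (Monoid.PushoutI.of (φ := amalgMaps h₀ h₁) false g) = ↑g) ∧
        (∀ g : parabolic Γ {a | a ∉ raagSupp Γ s},
            e (Monoid.PushoutI.of (φ := amalgMaps h₀ h₁) true g) = ↑g) := by
  refine raag_amalgam_main Γ (raagSupp Γ s) {x | ∀ b ∈ raagSupp Γ s, Γ.Adj x b}
    (fun a ha b hb => ha b hb) ?_
  intro x y hxy hxS
  rcases hsync x hxS y (Or.inl hxy.symm) with h | h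
  · exact Or.inl h
  · exact Or.inr h
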